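/- arXiv:2508.15183 — 7 statements merged into one kernel-verified Lean document; each statement's English description precedes it below -/
import Mathlib

section
/- Fix d ∈ ℕ, reals ε' > 0 and ε_1, …, ε_d > 0, an index i ∈ {1, …, d}, an integer o ≥ 0, and integers a_1, …, a_d and b_1, …, b_d with |a_j − b_j| ≤ 1 for every j ∈ {1, …, d}. Define A = ∑_{k=0}^∞ Geo(e^{−ε'})(k) · Geo(e^{−ε_i})(o + k − a_i) · ∏_{j=1}^{i−1} Geo(e^{−ε_j})(< k − a_j) and A' = ∑_{k=0}^∞ Geo(e^{−ε'})(k) · Geo(e^{−ε_i})(o + k − b_i) · ∏_{j=1}^{i−1} Geo(e^{−ε_j})(< k − b_j). Then A ≤ e^{2ε_i + ε'} · A'. (This is the probability that the AboveThreshold mechanism with threshold noise k ~ Geo(e^{−ε'}) and query noises y_j ~ Geo(e^{−ε_j}) outputs (o, i) on two neighboring datasets whose query values are a_j and b_j respectively; the bound is the ex-post DP guarantee 2ε_i + ε' for output (o, i).) -/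
open Real Finset

/-- The geometric distribution with failure probability `p`: mass `(1-p)·p^k` at each
integer `k ≥ 0`, and `0` at negative integers. -/
noncomputable def Geo (p : ℝ) (k : ℤ) : ℝ := if 0 ≤ k then (1 - p) * p ^ k.toNat else 0

/-- `Geo(p)(< x) = ∑_{y=0}^{x-1} Geo(p)(y)` (which is `0` when `x ≤ 0`). -/
noncomputable def GeoLT (p : ℝ) (x : ℤ) : ℝ := ∑ y ∈ Finset.range x.toNat, Geo p (y : ℤ)

lemma Geo_nonneg {p : ℝ} (hp0 : 0 ≤ p) (hp1 : p ≤ 1) (k : ℤ) : 0 ≤ Geo p k := by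
  unfold Geo
  split
  · exact mul_nonneg (by linarith) (pow_nonneg hp0 _)
  · exact le_refl 0

lemma Geo_le_one {p : ℝ} (hp0 : 0 ≤ p) (hp1 : p ≤ 1) (k : ℤ) : Geo p k ≤ 1 := by
  unfold Geo
  split
  · calc (1 - p) * p ^ k.toNat ≤ 1 * 1 :=
        mul_le_mul (by linarith) (pow_le_one₀ hp0 hp1) (pow_nonneg hp0 _) one_pos.le
    _ = 1 := one_mul 1
  · exact one_pos.le

lemma Geo_natCast (p : ℝ) (k : ℕ) : Geo p (k : ℤ) = (1 - p) * p ^ k := by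
  simp [Geo]

lemma GeoLT_nonneg {p : ℝ} (hp0 : 0 ≤ p) (hp1 : p ≤ 1) (x : ℤ) : 0 ≤ GeoLT p x :=
  Finset.sum_nonneg fun _ _ => Geo_nonneg hp0 hp1 _

lemma GeoLT_le_one {p : ℝ} (hp0 : 0 ≤ p) (hp1 : p ≤ 1) (x : ℤ) : GeoLT p x ≤ 1 := by
  unfold GeoLT
  have key : ∀ n : ℕ, ∑ y ∈ Finset.range n, Geo p (y : ℤ) = 1 - p ^ n := by
    intro n
    induction n with
    | zero => simp
    | succ n ih => rw [Finset.sum_range_succ, ih, Geo_natCast]; ring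
  rw [key]
  have := pow_nonneg hp0 x.toNat
  linarith

lemma GeoLT_mono {p : ℝ} (hp0 : 0 ≤ p) (hp1 : p ≤ 1) {x y : ℤ} (h : x ≤ y) :
    GeoLT p x ≤ GeoLT p y := by
  unfold GeoLT
  exact Finset.sum_le_sum_of_subset_of_nonneg
    (Finset.range_subset_range.2 (Int.toNat_le_toNat h))
    (fun _ _ _ => Geo_nonneg hp0 hp1 _)

lemma Geo_shift {e : ℝ} (he : 0 < e) {m n : ℤ} (hmn : m ≤ n) (hnm : n ≤ m + 2) :
    Geo (Real.exp (-e)) m ≤ Real.exp (2 * e) * Geo (Real.exp (-e)) n := by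
  set p := Real.exp (-e) with hp
  have hp0 : 0 < p := Real.exp_pos _
  have hp1 : p ≤ 1 := by
    rw [hp]; exact (Real.exp_le_one_iff).2 (by linarith)
  by_cases hm : 0 ≤ m
  · have hn : 0 ≤ n := le_trans hm hmn
    rw [Geo, Geo, if_pos hm, if_pos hn]
    have htn : n.toNat = m.toNat + (n - m).toNat := by omega
    have ht2 : (n - m).toNat ≤ 2 := by omega
    have hpow : Real.exp (2 * e) * p ^ (n - m).toNat ≥ 1 := by
      have h1 : p ^ 2 ≤ p ^ (n - m).toNat := pow_le_pow_of_le_one hp0.le hp1 ht2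
      have h2 : Real.exp (2 * e) * p ^ 2 = 1 := by
        rw [hp, ← Real.exp_nat_mul, ← Real.exp_add]
        norm_num
      nlinarith [Real.exp_pos (2 * e)]
    rw [htn, pow_add]
    nlinarith [mul_nonneg (sub_nonneg.2 hp1) (pow_nonneg hp0.le m.toNat),
      pow_nonneg hp0.le m.toNat, pow_nonneg hp0.le (n - m).toNat]
  · rw [Geo, if_neg hm]
    exact mul_nonneg (Real.exp_pos _).le (Geo_nonneg hp0.le hp1 n)

lemma summable_term {p : ℝ} (hp0 : 0 ≤ p) (hp1 : p < 1) (g : ℕ → ℝ)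
    (hg0 : ∀ k, 0 ≤ g k) (hg1 : ∀ k, g k ≤ 1) :
    Summable (fun k : ℕ => Geo p (k : ℤ) * g k) := by
  apply Summable.of_nonneg_of_le
    (fun k => mul_nonneg (Geo_nonneg hp0 hp1.le _) (hg0 k))
    (fun k => ?_)
    ((summable_geometric_of_lt_one hp0 hp1).mul_left (1 - p))
  rw [Geo_natCast]
  calc (1 - p) * p ^ k * g k ≤ (1 - p) * p ^ k * 1 :=
      mul_le_mul_of_nonneg_left (hg1 k) (mul_nonneg (by linarith) (pow_nonneg hp0 _))
  _ = (1 - p) * p ^ k := mul_one _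

/-- Ex-post DP guarantee of the AboveThreshold mechanism for an output `(o, i)`:
on neighboring datasets with query values `a j` and `b j` (sensitivity 1), the probability
of outputting `(o, i)` increases by at most a factor `e^(2 ε_i + ε')`. -/
theorem abovethreshold_expost_output
    (d : ℕ) (ε' : ℝ) (hε' : 0 < ε')
    (ε : Fin d → ℝ) (hε : ∀ j, 0 < ε j)
    (i : Fin d) (o : ℤ) (ho : 0 ≤ o)
    (a b : Fin d → ℤ) (hab : ∀ j, |a j - b j| ≤ 1) :
    (∑' k : ℕ, Geo (Real.exp (-ε')) k *
        Geo (Real.exp (-(ε i))) (o + k - a i) *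
        ∏ j ∈ Finset.univ.filter (fun j => j < i), GeoLT (Real.exp (-(ε j))) (k - a j))
    ≤ Real.exp (2 * ε i + ε') *
      ∑' k : ℕ, Geo (Real.exp (-ε')) k *
        Geo (Real.exp (-(ε i))) (o + k - b i) *
        ∏ j ∈ Finset.univ.filter (fun j => j < i), GeoLT (Real.exp (-(ε j))) (k - b j) := by
  have hp'0 : (0:ℝ) < Real.exp (-ε') := Real.exp_pos _
  have hp'1 : Real.exp (-ε') < 1 := Real.exp_lt_one_iff.2 (by linarith)
  have hpj0 : ∀ j : Fin d, (0:ℝ) < Real.exp (-(ε j)) := fun j => Real.exp_pos _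
  have hpj1 : ∀ j : Fin d, Real.exp (-(ε j)) ≤ 1 := fun j =>
    Real.exp_le_one_iff.2 (by linarith [hε j])
  set F : (Fin d → ℤ) → ℕ → ℝ := fun c k =>
    Geo (Real.exp (-ε')) k * Geo (Real.exp (-(ε i))) (o + k - c i) *
      ∏ j ∈ Finset.univ.filter (fun j => j < i), GeoLT (Real.exp (-(ε j))) (k - c j)
    with hF
  have hFsummable : ∀ c : Fin d → ℤ, Summable (F c) := by
    intro c
    have := summable_term hp'0.le hp'1
      (fun k => Geo (Real.exp (-(ε i))) (o + k - c i) *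
        ∏ j ∈ Finset.univ.filter (fun j => j < i), GeoLT (Real.exp (-(ε j))) (k - c j))
      (fun k => mul_nonneg (Geo_nonneg (hpj0 i).le (hpj1 i) _)
        (Finset.prod_nonneg fun j _ => GeoLT_nonneg (hpj0 j).le (hpj1 j) _))
      (fun k => by
        show Geo (Real.exp (-(ε i))) (o + (k:ℤ) - c i) *
          (∏ j ∈ Finset.univ.filter (fun j => j < i),
            GeoLT (Real.exp (-(ε j))) ((k:ℤ) - c j)) ≤ 1
        have h1 := Geo_le_one (hpj0 i).le (hpj1 i) (o + (k:ℤ) - c i)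
        have h2 : (∏ j ∈ Finset.univ.filter (fun j => j < i),
            GeoLT (Real.exp (-(ε j))) ((k:ℤ) - c j)) ≤ 1 :=
          Finset.prod_le_one (fun j _ => GeoLT_nonneg (hpj0 j).le (hpj1 j) _)
            (fun j _ => GeoLT_le_one (hpj0 j).le (hpj1 j) _)
        have h3 : (0:ℝ) ≤ ∏ j ∈ Finset.univ.filter (fun j => j < i),
            GeoLT (Real.exp (-(ε j))) ((k:ℤ) - c j) :=
          Finset.prod_nonneg fun j _ => GeoLT_nonneg (hpj0 j).le (hpj1 j) _
        nlinarith [Geo_nonneg (hpj0 i).le (hpj1 i) (o + (k:ℤ) - c i)])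
    exact this.congr fun k => by simp [hF]; ring
  have hFnonneg : ∀ c k, 0 ≤ F c k := fun c k =>
    mul_nonneg (mul_nonneg (Geo_nonneg hp'0.le hp'1.le _)
      (Geo_nonneg (hpj0 i).le (hpj1 i) _))
      (Finset.prod_nonneg fun j _ => GeoLT_nonneg (hpj0 j).le (hpj1 j) _)
  -- pointwise inequality
  have key : ∀ k : ℕ, F a k ≤ Real.exp (2 * ε i + ε') * F b (k + 1) := by
    intro k
    have hG' : Geo (Real.exp (-ε')) (k : ℤ) =
        Real.exp ε' * Geo (Real.exp (-ε')) ((k + 1 : ℕ) : ℤ) := by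
      rw [Geo_natCast, Geo_natCast, pow_succ]
      rw [← mul_assoc, ← mul_assoc]
      have : Real.exp ε' * (1 - Real.exp (-ε')) * Real.exp (-ε') ^ k * Real.exp (-ε')
          = (1 - Real.exp (-ε')) * Real.exp (-ε') ^ k * (Real.exp ε' * Real.exp (-ε')) := by
        ring
      rw [this, ← Real.exp_add]
      simp
    have habi := abs_le.1 (hab i)
    have hGi : Geo (Real.exp (-(ε i))) (o + k - a i) ≤
        Real.exp (2 * ε i) * Geo (Real.exp (-(ε i))) (o + (k + 1 : ℕ) - b i) := by
      apply Geo_shift (hε i) <;> push_cast <;> omega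
    have hProd : (∏ j ∈ Finset.univ.filter (fun j => j < i),
        GeoLT (Real.exp (-(ε j))) (k - a j)) ≤
        ∏ j ∈ Finset.univ.filter (fun j => j < i),
          GeoLT (Real.exp (-(ε j))) ((k + 1 : ℕ) - b j) := by
      apply Finset.prod_le_prod
        (fun j _ => GeoLT_nonneg (hpj0 j).le (hpj1 j) _)
      intro j _
      apply GeoLT_mono (hpj0 j).le (hpj1 j)
      have := abs_le.1 (hab j)
      push_cast
      omega
    have e1 : F a k = (Real.exp ε' * Geo (Real.exp (-ε')) ((k+1 : ℕ) : ℤ)) *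
        Geo (Real.exp (-(ε i))) (o + k - a i) *
        ∏ j ∈ Finset.univ.filter (fun j => j < i), GeoLT (Real.exp (-(ε j))) (k - a j) := by
      simp only [hF]
      rw [hG']
    have e2 : (Real.exp ε' * Geo (Real.exp (-ε')) ((k+1 : ℕ) : ℤ)) *
        Geo (Real.exp (-(ε i))) (o + k - a i) *
        (∏ j ∈ Finset.univ.filter (fun j => j < i), GeoLT (Real.exp (-(ε j))) (k - a j)) ≤
        (Real.exp ε' * Geo (Real.exp (-ε')) ((k+1 : ℕ) : ℤ)) *
        (Real.exp (2 * ε i) * Geo (Real.exp (-(ε i))) (o + (k + 1 : ℕ) - b i)) *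
        ∏ j ∈ Finset.univ.filter (fun j => j < i),
          GeoLT (Real.exp (-(ε j))) ((k + 1 : ℕ) - b j) := by
      apply mul_le_mul (mul_le_mul_of_nonneg_left hGi
          (mul_nonneg (Real.exp_pos _).le (Geo_nonneg hp'0.le hp'1.le _)))
        hProd
        (Finset.prod_nonneg fun j _ => GeoLT_nonneg (hpj0 j).le (hpj1 j) _)
        (mul_nonneg (mul_nonneg (Real.exp_pos _).le (Geo_nonneg hp'0.le hp'1.le _))
          (mul_nonneg (Real.exp_pos _).le (Geo_nonneg (hpj0 i).le (hpj1 i) _)))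
    have e3 : (Real.exp ε' * Geo (Real.exp (-ε')) ((k+1 : ℕ) : ℤ)) *
        (Real.exp (2 * ε i) * Geo (Real.exp (-(ε i))) (o + (k + 1 : ℕ) - b i)) *
        (∏ j ∈ Finset.univ.filter (fun j => j < i),
          GeoLT (Real.exp (-(ε j))) ((k + 1 : ℕ) - b j)) =
        Real.exp (2 * ε i + ε') * F b (k + 1) := by
      simp only [hF, Real.exp_add]
      push_cast
      ring
    rw [e1, ← e3]
    exact e2
  have hshift : Summable (fun k : ℕ => F b (k + 1)) :=
    (summable_nat_add_iff 1).2 (hFsummable b)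
  show (∑' k : ℕ, F a k) ≤ Real.exp (2 * ε i + ε') * ∑' k : ℕ, F b k
  calc (∑' k : ℕ, F a k) ≤ ∑' k : ℕ, Real.exp (2 * ε i + ε') * F b (k + 1) :=
      Summable.tsum_le_tsum key (hFsummable a) (hshift.mul_left _)
  _ = Real.exp (2 * ε i + ε') * ∑' k : ℕ, F b (k + 1) := tsum_mul_left
  _ ≤ Real.exp (2 * ε i + ε') * ∑' k : ℕ, F b k := by
      apply mul_le_mul_of_nonneg_left _ (Real.exp_pos _).le
      rw [Summable.tsum_eq_zero_add (hFsummable b)]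
      linarith [hFnonneg b 0]
end

section
/- Fix d ∈ ℕ, reals ε' > 0 and ε_1, …, ε_d > 0, an index i ∈ {1, …, d}, reals q, q' ∈ [0, 1] with q ≤ e^{ε_i}·q', and reals r_1, …, r_{i−1}, r'_1, …, r'_{i−1} ∈ [0, 1] with r_j ≥ e^{−ε_j}·r'_j for every j < i. Then ∑_{k=0}^∞ Geo(e^{−ε'})(k) · e^{−ε_i k}·q · ∏_{j=1}^{i−1} (1 − e^{−ε_j k}·r_j) ≤ e^{2ε_i + ε'} · ∑_{k=0}^∞ Geo(e^{−ε'})(k) · e^{−ε_i k}·q' · ∏_{j=1}^{i−1} (1 − e^{−ε_j k}·r'_j). (Here q = Pr[M_i(D) = o] and r_j = Pr[M_j(D) ≥ τ] for ε_j-DP mechanisms M_j on neighboring datasets D, D', so this is the ex-post 2ε_i + ε' guarantee for the Generalized AboveThreshold mechanism with random dropping on output (o, i) with o ≥ τ.) -/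
open Real Finset

/-- Ex-post DP guarantee of the Generalized AboveThreshold mechanism with random dropping
for an output `(o, i)` with `o ≥ τ`: here `q = Pr[M_i(D) = o]`, `q' = Pr[M_i(D') = o]`,
`r j = Pr[M_j(D) ≥ τ]`, `r' j = Pr[M_j(D') ≥ τ]`, and `ε_j`-DP of `M_j` yields the
hypotheses `q ≤ e^(ε_i) q'` and `r j ≥ e^(-ε_j) r' j`. The probability of outputting
`(o, i)` increases by at most a factor `e^(2 ε_i + ε')`. -/
theorem generalized_abovethreshold_expost_output
    (d : ℕ) (ε' : ℝ) (hε' : 0 < ε')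
    (ε : Fin d → ℝ) (hε : ∀ j, 0 < ε j)
    (i : Fin d)
    (q q' : ℝ) (hq : q ∈ Set.Icc (0:ℝ) 1) (hq' : q' ∈ Set.Icc (0:ℝ) 1)
    (hqq' : q ≤ Real.exp (ε i) * q')
    (r r' : Fin d → ℝ)
    (hr : ∀ j, r j ∈ Set.Icc (0:ℝ) 1) (hr' : ∀ j, r' j ∈ Set.Icc (0:ℝ) 1)
    (hrr' : ∀ j, j < i → Real.exp (-(ε j)) * r' j ≤ r j) :
    (∑' k : ℕ, Geo (Real.exp (-ε')) k *
        (Real.exp (-(ε i) * k) * q) *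
        ∏ j ∈ Finset.univ.filter (fun j => j < i), (1 - Real.exp (-(ε j) * k) * r j))
    ≤ Real.exp (2 * ε i + ε') *
      ∑' k : ℕ, Geo (Real.exp (-ε')) k *
        (Real.exp (-(ε i) * k) * q') *
        ∏ j ∈ Finset.univ.filter (fun j => j < i), (1 - Real.exp (-(ε j) * k) * r' j) := by
  set p := Real.exp (-ε') with hp
  have hp0 : 0 < p := Real.exp_pos _
  have hp1 : p < 1 := by
    rw [hp, Real.exp_lt_one_iff]; linarith
  have hGeo : ∀ k : ℕ, Geo p (k : ℤ) = (1 - p) * p ^ k := by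
    intro k; simp [Geo]
  set S := Finset.univ.filter (fun j : Fin d => j < i) with hS
  set F : ℕ → ℝ := fun k => Geo p (k : ℤ) * (Real.exp (-(ε i) * k) * q) *
      ∏ j ∈ S, (1 - Real.exp (-(ε j) * k) * r j) with hF
  set F' : ℕ → ℝ := fun k => Geo p (k : ℤ) * (Real.exp (-(ε i) * k) * q') *
      ∏ j ∈ S, (1 - Real.exp (-(ε j) * k) * r' j) with hF'
  -- factor bounds
  have fac_mem : ∀ (s : Fin d → ℝ), (∀ j, s j ∈ Set.Icc (0:ℝ) 1) → ∀ (k : ℕ) (j : Fin d),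
      (1 - Real.exp (-(ε j) * k) * s j) ∈ Set.Icc (0:ℝ) 1 := by
    intro s hs k j
    have hk : (0:ℝ) ≤ (k:ℝ) := by positivity
    have h1 : Real.exp (-(ε j) * k) ≤ 1 := by
      rw [Real.exp_le_one_iff]
      nlinarith [(hε j).le]
    have h0 : 0 ≤ Real.exp (-(ε j) * k) := (Real.exp_pos _).le
    have hs0 := (hs j).1
    have hs1 := (hs j).2
    constructor
    · nlinarith
    · nlinarith
  have prod_mem : ∀ (s : Fin d → ℝ), (∀ j, s j ∈ Set.Icc (0:ℝ) 1) → ∀ (k : ℕ),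
      (∏ j ∈ S, (1 - Real.exp (-(ε j) * k) * s j)) ∈ Set.Icc (0:ℝ) 1 := by
    intro s hs k
    constructor
    · exact Finset.prod_nonneg fun j _ => (fac_mem s hs k j).1
    · exact Finset.prod_le_one (fun j _ => (fac_mem s hs k j).1)
        (fun j _ => (fac_mem s hs k j).2)
  have hexp01 : ∀ k : ℕ, Real.exp (-(ε i) * k) * q ∈ Set.Icc (0:ℝ) 1 := by
    intro k
    have hk : (0:ℝ) ≤ (k:ℝ) := by positivity
    have h1 : Real.exp (-(ε i) * k) ≤ 1 := by
      rw [Real.exp_le_one_iff]; nlinarith [(hε i).le]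
    have h0 : 0 ≤ Real.exp (-(ε i) * k) := (Real.exp_pos _).le
    exact ⟨mul_nonneg h0 hq.1, by nlinarith [hq.1, hq.2]⟩
  have hexp01' : ∀ k : ℕ, Real.exp (-(ε i) * k) * q' ∈ Set.Icc (0:ℝ) 1 := by
    intro k
    have hk : (0:ℝ) ≤ (k:ℝ) := by positivity
    have h1 : Real.exp (-(ε i) * k) ≤ 1 := by
      rw [Real.exp_le_one_iff]; nlinarith [(hε i).le]
    have h0 : 0 ≤ Real.exp (-(ε i) * k) := (Real.exp_pos _).le
    exact ⟨mul_nonneg h0 hq'.1, by nlinarith [hq'.1, hq'.2]⟩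
  have hGeo_nonneg : ∀ k : ℕ, 0 ≤ Geo p (k : ℤ) := by
    intro k; rw [hGeo]
    exact mul_nonneg (by linarith) (pow_nonneg hp0.le k)
  have hGeo_le : ∀ k : ℕ, Geo p (k : ℤ) ≤ (1 - p) * p ^ k := by
    intro k; rw [hGeo]
  have hFnn : ∀ k, 0 ≤ F k := by
    intro k
    exact mul_nonneg (mul_nonneg (hGeo_nonneg k) (hexp01 k).1) (prod_mem r hr k).1
  have hF'nn : ∀ k, 0 ≤ F' k := by
    intro k
    exact mul_nonneg (mul_nonneg (hGeo_nonneg k) (hexp01' k).1) (prod_mem r' hr' k).1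
  have hbound : ∀ (G : ℕ → ℝ), (∀ k, 0 ≤ G k) →
      (∀ k, G k ≤ (1 - p) * p ^ k) → Summable G := by
    intro G h0 hle
    refine Summable.of_nonneg_of_le h0 hle ?_
    exact (summable_geometric_of_lt_one hp0.le hp1).mul_left _
  have hFle : ∀ k, F k ≤ (1 - p) * p ^ k := by
    intro k
    calc F k ≤ Geo p (k : ℤ) * 1 * 1 := by
          apply mul_le_mul
          · exact mul_le_mul_of_nonneg_left (hexp01 k).2 (hGeo_nonneg k)
          · exact (prod_mem r hr k).2
          · exact (prod_mem r hr k).1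
          · exact mul_nonneg (hGeo_nonneg k) zero_le_one
      _ = Geo p (k : ℤ) := by ring
      _ ≤ (1 - p) * p ^ k := hGeo_le k
  have hF'le : ∀ k, F' k ≤ (1 - p) * p ^ k := by
    intro k
    calc F' k ≤ Geo p (k : ℤ) * 1 * 1 := by
          apply mul_le_mul
          · exact mul_le_mul_of_nonneg_left (hexp01' k).2 (hGeo_nonneg k)
          · exact (prod_mem r' hr' k).2
          · exact (prod_mem r' hr' k).1
          · exact mul_nonneg (hGeo_nonneg k) zero_le_one
      _ = Geo p (k : ℤ) := by ring
      _ ≤ (1 - p) * p ^ k := hGeo_le k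
  have hsumF : Summable F := hbound F hFnn hFle
  have hsumF' : Summable F' := hbound F' hF'nn hF'le
  -- key term-by-term inequality
  have key : ∀ k : ℕ, F k ≤ Real.exp (2 * ε i + ε') * F' (k + 1) := by
    intro k
    have hprod : (∏ j ∈ S, (1 - Real.exp (-(ε j) * k) * r j)) ≤
        ∏ j ∈ S, (1 - Real.exp (-(ε j) * (k+1 : ℕ)) * r' j) := by
      apply Finset.prod_le_prod
      · intro j _; exact (fac_mem r hr k j).1
      · intro j hj
        have hji : j < i := by
          simpa [hS] using hj
        have : Real.exp (-(ε j) * ((k:ℝ)+1)) * r' j ≤ Real.exp (-(ε j) * k) * r j := by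
          have heq : Real.exp (-(ε j) * ((k:ℝ)+1)) = Real.exp (-(ε j) * k) * Real.exp (-(ε j)) := by
            rw [← Real.exp_add]; ring_nf
          rw [heq, mul_assoc]
          exact mul_le_mul_of_nonneg_left (hrr' j hji) (Real.exp_pos _).le
        push_cast
        linarith
    have hscal : Geo p (k : ℤ) * (Real.exp (-(ε i) * k) * q) ≤
        Real.exp (2 * ε i + ε') * (Geo p ((k+1 : ℕ) : ℤ) * (Real.exp (-(ε i) * (k+1 : ℕ)) * q')) := by
      rw [hGeo, hGeo]
      have hpk : ∀ m : ℕ, p ^ m = Real.exp ((m : ℝ) * (-ε')) := by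
        intro m; rw [hp, ← Real.exp_nat_mul]
      rw [hpk, hpk]
      push_cast
      have h1 : Real.exp (2 * ε i + ε') * (Real.exp (((k:ℝ)+1) * (-ε')) *
          Real.exp (-(ε i) * ((k:ℝ)+1))) =
          Real.exp ((k : ℝ) * (-ε')) * Real.exp (-(ε i) * k) * Real.exp (ε i) := by
        rw [← Real.exp_add, ← Real.exp_add, ← Real.exp_add, ← Real.exp_add]
        congr 1; ring
      have heq : Real.exp (2 * ε i + ε') * ((1 - p) * Real.exp (((k:ℝ)+1) * (-ε')) *
          (Real.exp (-(ε i) * ((k:ℝ)+1)) * q')) =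
          (1 - p) * Real.exp ((k : ℝ) * (-ε')) * (Real.exp (-(ε i) * k) * (Real.exp (ε i) * q')) := by
        linear_combination (1 - p) * q' * h1
      rw [heq]
      have h0 : 0 ≤ (1 - p) * Real.exp ((k : ℝ) * (-ε')) :=
        mul_nonneg (by linarith) (Real.exp_pos _).le
      apply mul_le_mul_of_nonneg_left _ h0
      exact mul_le_mul_of_nonneg_left hqq' (Real.exp_pos _).le
    have h1 : F k ≤ Geo p (k : ℤ) * (Real.exp (-(ε i) * k) * q) *
        ∏ j ∈ S, (1 - Real.exp (-(ε j) * (k+1 : ℕ)) * r' j) := by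
      apply mul_le_mul_of_nonneg_left hprod
      exact mul_nonneg (hGeo_nonneg k) (hexp01 k).1
    have h2 : Geo p (k : ℤ) * (Real.exp (-(ε i) * k) * q) *
        (∏ j ∈ S, (1 - Real.exp (-(ε j) * (k+1 : ℕ)) * r' j)) ≤
        Real.exp (2 * ε i + ε') * F' (k+1) := by
      have : Real.exp (2 * ε i + ε') * F' (k+1) =
          (Real.exp (2 * ε i + ε') * (Geo p ((k+1 : ℕ) : ℤ) * (Real.exp (-(ε i) * (k+1 : ℕ)) * q'))) *
          ∏ j ∈ S, (1 - Real.exp (-(ε j) * (k+1 : ℕ)) * r' j) := by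
        rw [hF']; push_cast; ring
      rw [this]
      exact mul_le_mul_of_nonneg_right hscal (prod_mem r' hr' (k+1)).1
    exact le_trans h1 h2
  -- conclude
  have hshift : Summable (fun k : ℕ => F' (k + 1)) := by
    exact (summable_nat_add_iff 1).mpr hsumF'
  calc (∑' k : ℕ, F k) ≤ ∑' k : ℕ, Real.exp (2 * ε i + ε') * F' (k + 1) :=
        Summable.tsum_le_tsum key hsumF (hshift.mul_left _)
    _ = Real.exp (2 * ε i + ε') * ∑' k : ℕ, F' (k + 1) := tsum_mul_left
    _ ≤ Real.exp (2 * ε i + ε') * ∑' k : ℕ, F' k := by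
        apply mul_le_mul_of_nonneg_left _ (Real.exp_pos _).le
        have := (Summable.tsum_eq_zero_add hsumF').symm
        calc (∑' k : ℕ, F' (k + 1)) ≤ F' 0 + ∑' k : ℕ, F' (k + 1) := by
              linarith [hF'nn 0]
          _ = ∑' k : ℕ, F' k := (Summable.tsum_eq_zero_add hsumF').symm
end

section
/- Fix d ∈ ℕ, reals ε' > 0 and ε_1, …, ε_d > 0, and reals r_1, …, r_d, r'_1, …, r'_d ∈ [0, 1] with r_j ≥ e^{−ε_j}·r'_j for every j ∈ {1, …, d}. Then ∑_{k=0}^∞ Geo(e^{−ε'})(k) · ∏_{j=1}^{d} (1 − e^{−ε_j k}·r_j) ≤ e^{ε'} · ∑_{k=0}^∞ Geo(e^{−ε'})(k) · ∏_{j=1}^{d} (1 − e^{−ε_j k}·r'_j). (Here r_j = Pr[M_j(D) ≥ τ] for ε_j-DP mechanisms M_j on neighboring datasets, so this is the ex-post ε' guarantee of the Generalized AboveThreshold mechanism with random dropping for the output ⊥.) -/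
open Real Finset

/-- Ex-post DP guarantee of the Generalized AboveThreshold mechanism with random dropping
for the output `⊥`: here `r j = Pr[M_j(D) ≥ τ]` and `r' j = Pr[M_j(D') ≥ τ]`, and
`ε_j`-DP of `M_j` yields the hypothesis `r j ≥ e^(-ε_j) r' j`. The probability of
outputting `⊥` increases by at most a factor `e^(ε')`. -/
theorem generalized_abovethreshold_expost_bot
    (d : ℕ) (ε' : ℝ) (hε' : 0 < ε')
    (ε : Fin d → ℝ) (hε : ∀ j, 0 < ε j)
    (r r' : Fin d → ℝ)
    (hr : ∀ j, r j ∈ Set.Icc (0:ℝ) 1) (hr' : ∀ j, r' j ∈ Set.Icc (0:ℝ) 1)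
    (hrr' : ∀ j, Real.exp (-(ε j)) * r' j ≤ r j) :
    (∑' k : ℕ, Geo (Real.exp (-ε')) k *
        ∏ j : Fin d, (1 - Real.exp (-(ε j) * k) * r j))
    ≤ Real.exp ε' *
      ∑' k : ℕ, Geo (Real.exp (-ε')) k *
        ∏ j : Fin d, (1 - Real.exp (-(ε j) * k) * r' j) := by
  set p := Real.exp (-ε') with hpdef
  have hp0 : 0 < p := Real.exp_pos _
  have hp1 : p < 1 := by
    rw [hpdef, ← Real.exp_zero]
    exact Real.exp_lt_exp.mpr (by linarith)
  have hgeo : ∀ k : ℕ, Geo p k = (1 - p) * p ^ k := by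
    intro k; simp [Geo]
  have hep : Real.exp ε' * p = 1 := by
    rw [hpdef, ← Real.exp_add]; simp
  -- products lie in [0,1]
  have hprod : ∀ (s : Fin d → ℝ), (∀ j, s j ∈ Set.Icc (0:ℝ) 1) →
      ∀ k : ℕ, (∏ j : Fin d, (1 - Real.exp (-(ε j) * k) * s j)) ∈ Set.Icc (0:ℝ) 1 := by
    intro s hs k
    have hfac : ∀ j : Fin d, (1 - Real.exp (-(ε j) * k) * s j) ∈ Set.Icc (0:ℝ) 1 := by
      intro j
      have he1 : Real.exp (-(ε j) * k) ≤ 1 := by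
        rw [← Real.exp_zero]
        apply Real.exp_le_exp.mpr
        have := (hε j).le
        have : (0:ℝ) ≤ k := Nat.cast_nonneg k
        nlinarith [(hε j).le]
      have he0 : 0 < Real.exp (-(ε j) * k) := Real.exp_pos _
      constructor
      · nlinarith [(hs j).1, (hs j).2]
      · nlinarith [(hs j).1, (hs j).2]
    constructor
    · exact Finset.prod_nonneg fun j _ => (hfac j).1
    · exact Finset.prod_le_one (fun j _ => (hfac j).1) (fun j _ => (hfac j).2)
  -- summability
  have hgsum : Summable fun k : ℕ => (1 - p) * p ^ k :=
    (summable_geometric_of_lt_one hp0.le hp1).mul_left _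
  have hsum : ∀ (s : Fin d → ℝ), (∀ j, s j ∈ Set.Icc (0:ℝ) 1) →
      Summable (fun k : ℕ => Geo p k * ∏ j : Fin d, (1 - Real.exp (-(ε j) * k) * s j)) := by
    intro s hs
    apply Summable.of_nonneg_of_le (fun k => ?_) (fun k => ?_) hgsum
    · rw [hgeo]
      exact mul_nonneg (mul_nonneg (by linarith) (pow_nonneg hp0.le _)) (hprod s hs k).1
    · rw [hgeo]
      calc (1 - p) * p ^ k * ∏ j : Fin d, (1 - Real.exp (-(ε j) * k) * s j)
          ≤ (1 - p) * p ^ k * 1 := by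
            apply mul_le_mul_of_nonneg_left (hprod s hs k).2
            exact mul_nonneg (by linarith) (pow_nonneg hp0.le _)
        _ = (1 - p) * p ^ k := mul_one _
  have hsumL := hsum r hr
  have hsumR := hsum r' hr'
  set g : ℕ → ℝ := fun k => Geo p k * ∏ j : Fin d, (1 - Real.exp (-(ε j) * k) * r' j) with hg
  have hgnn : ∀ k, 0 ≤ g k := by
    intro k
    simp only [hg, hgeo]
    exact mul_nonneg (mul_nonneg (by linarith) (pow_nonneg hp0.le _)) (hprod r' hr' k).1
  -- termwise inequality
  have hterm : ∀ k : ℕ,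
      Geo p k * ∏ j : Fin d, (1 - Real.exp (-(ε j) * k) * r j)
        ≤ Real.exp ε' * g (k + 1) := by
    intro k
    have hP : (∏ j : Fin d, (1 - Real.exp (-(ε j) * k) * r j))
        ≤ ∏ j : Fin d, (1 - Real.exp (-(ε j) * (k + 1 : ℕ)) * r' j) := by
      apply Finset.prod_le_prod
      · intro j _
        have he1 : Real.exp (-(ε j) * k) ≤ 1 := by
          rw [← Real.exp_zero]
          apply Real.exp_le_exp.mpr
          nlinarith [(hε j).le, Nat.cast_nonneg (α := ℝ) k]
        nlinarith [(hr j).1, (hr j).2, Real.exp_pos (-(ε j) * k)]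
      · intro j _
        have key : Real.exp (-(ε j) * (k + 1 : ℕ)) * r' j ≤ Real.exp (-(ε j) * k) * r j := by
          have : Real.exp (-(ε j) * (k + 1 : ℕ)) = Real.exp (-(ε j) * k) * Real.exp (-(ε j)) := by
            rw [← Real.exp_add]; push_cast; ring_nf
          rw [this, mul_assoc]
          exact mul_le_mul_of_nonneg_left (hrr' j) (Real.exp_pos _).le
        linarith
    have hG : Real.exp ε' * Geo p ((k + 1 : ℕ) : ℤ) = Geo p k := by
      rw [hgeo, hgeo, pow_succ]
      calc Real.exp ε' * ((1 - p) * (p ^ k * p)) = (Real.exp ε' * p) * ((1 - p) * p ^ k) := by ring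
        _ = (1 - p) * p ^ k := by rw [hep, one_mul]
    have hGnn : 0 ≤ Geo p k := by
      rw [hgeo]; exact mul_nonneg (by linarith) (pow_nonneg hp0.le _)
    calc Geo p k * ∏ j : Fin d, (1 - Real.exp (-(ε j) * k) * r j)
        ≤ Geo p k * ∏ j : Fin d, (1 - Real.exp (-(ε j) * (k + 1 : ℕ)) * r' j) :=
          mul_le_mul_of_nonneg_left hP hGnn
      _ = Real.exp ε' * g (k + 1) := by
          rw [hg, ← hG]; push_cast; ring
  -- shifted sum summable
  have hsumShift : Summable fun k : ℕ => g (k + 1) := (summable_nat_add_iff 1).mpr hsumR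
  calc (∑' k : ℕ, Geo p k * ∏ j : Fin d, (1 - Real.exp (-(ε j) * k) * r j))
      ≤ ∑' k : ℕ, Real.exp ε' * g (k + 1) :=
        Summable.tsum_le_tsum hterm hsumL (hsumShift.mul_left _)
    _ = Real.exp ε' * ∑' k : ℕ, g (k + 1) := tsum_mul_left
    _ ≤ Real.exp ε' * ∑' k : ℕ, g k := by
        apply mul_le_mul_of_nonneg_left _ (Real.exp_pos ε').le
        have h0 : ∑' k : ℕ, g k = g 0 + ∑' k : ℕ, g (k + 1) := Summable.tsum_eq_zero_add hsumR
        linarith [hgnn 0]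
end

section
/- Let ε' > 0, ε* > 0, and α, β ∈ (0, 1), and let T = ⌈(1/α)·(2/β)^{ε*/ε'}·ln(2/β)⌉. Then ∑_{k=0}^∞ (1 − e^{−ε'})·e^{−ε' k} · (1 − α·e^{−ε* k})^{T} ≤ β. (This is the key estimate showing that if some mechanism M_{i*} with privacy parameter ε* outputs a value ≥ o* with probability at least α, and it is repeated T times in the hyperparameter tuning mechanism with random dropping using threshold noise k ~ Geo(e^{−ε'}), then the probability that every copy is either dropped (each copy survives with probability e^{−ε* k}) or outputs below o* is at most β; hence the mechanism outputs an element larger than (o*, 0) with probability at least 1 − β.) -/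
open Real

/-!
Write `p = e^{-ε'}` and `L = ln(2/β)/ε'`, so that the sum is `∑ (1 - p) p^k g k` with
`0 ≤ g ≤ 1` and `p^⌈L⌉ ≤ β/2`. For `k ≤ L` the survival probability `e^{-ε* k}` is at least
`(2/β)^{-ε*/ε'}`, which the choice of `T` exactly compensates: `T α e^{-ε* k} ≥ ln(2/β)`, hence
`g k ≤ exp(-T α e^{-ε* k}) ≤ β/2`. The terms with `k < ⌈L⌉` thus contribute at most `β/2`, and
the geometric tail beyond `⌈L⌉` has mass `p^⌈L⌉ ≤ β/2`.
-/

theorem hasSum_one_sub_mul_pow {p : ℝ} (hp0 : 0 ≤ p) (hp1 : p < 1) :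
    HasSum (fun k : ℕ => (1 - p) * p ^ k) 1 := by
  simpa [mul_inv_cancel₀ (sub_ne_zero.2 hp1.ne')] using
    (hasSum_geometric_of_lt_one hp0 hp1).mul_left (1 - p)

theorem tsum_one_sub_mul_pow_mul_le {p c : ℝ} {g : ℕ → ℝ} (hp0 : 0 ≤ p) (hp1 : p < 1)
    (hg0 : ∀ k, 0 ≤ g k) (hg1 : ∀ k, g k ≤ 1) (N : ℕ) (hc : 0 ≤ c) (hgc : ∀ k < N, g k ≤ c) :
    ∑' k, (1 - p) * p ^ k * g k ≤ c + p ^ N := by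
  have hw0 : ∀ k : ℕ, 0 ≤ (1 - p) * p ^ k := fun k =>
    mul_nonneg (sub_nonneg.2 hp1.le) (pow_nonneg hp0 k)
  have hle : ∀ k, (1 - p) * p ^ k * g k ≤ (1 - p) * p ^ k := fun k =>
    mul_le_of_le_one_right (hw0 k) (hg1 k)
  have hsum : Summable fun k => (1 - p) * p ^ k * g k :=
    (hasSum_one_sub_mul_pow hp0 hp1).summable.of_nonneg_of_le
      (fun k => mul_nonneg (hw0 k) (hg0 k)) hle
  have head : ∑ k ∈ Finset.range N, (1 - p) * p ^ k * g k ≤ c := calc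
    _ ≤ ∑ k ∈ Finset.range N, c * ((1 - p) * p ^ k) := Finset.sum_le_sum fun k hk => by
          rw [mul_comm c]; exact mul_le_mul_of_nonneg_left (hgc k (Finset.mem_range.1 hk)) (hw0 k)
    _ = c * (1 - p ^ N) := by rw [← Finset.mul_sum, ← Finset.mul_sum, mul_neg_geom_sum]
    _ ≤ c := by nlinarith [pow_nonneg hp0 N]
  have tail : HasSum (fun k => (1 - p) * p ^ (k + N)) (p ^ N) := by
    simpa [pow_add, mul_comm, mul_left_comm, mul_assoc] using
      (hasSum_one_sub_mul_pow hp0 hp1).mul_left (p ^ N)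
  have tail_le : ∑' k, (1 - p) * p ^ (k + N) * g (k + N) ≤ p ^ N := by
    rw [← tail.tsum_eq]
    exact ((summable_nat_add_iff N).2 hsum).tsum_le_tsum (fun k => hle (k + N)) tail.summable
  rw [← hsum.sum_add_tsum_nat_add N]
  exact add_le_add head tail_le

theorem one_sub_pow_le_inv_of_log_le {x b : ℝ} {n : ℕ} (hx : x ≤ 1) (hb : 0 < b)
    (h : log b ≤ n * x) : (1 - x) ^ n ≤ b⁻¹ := calc
  (1 - x) ^ n ≤ exp (-x) ^ n := pow_le_pow_left₀ (by linarith) (one_sub_le_exp_neg x) n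
  _ = exp (-(n * x)) := by rw [← exp_nat_mul]; ring_nf
  _ ≤ exp (-log b) := exp_le_exp.2 (neg_le_neg h)
  _ = b⁻¹ := by rw [exp_neg, exp_log hb]

theorem log_le_mul_exp_neg {ε' εs α b k : ℝ} (hεs : 0 ≤ εs) (hα : 0 < α)
    (hb : 1 ≤ b) (hk : k ≤ log b / ε') :
    log b ≤ (1 / α) * b ^ (εs / ε') * log b * (α * exp (-εs * k)) := by
  have hexp : 1 ≤ b ^ (εs / ε') * exp (-εs * k) := by
    rw [rpow_def_of_pos (by linarith), ← exp_add]
    apply one_le_exp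
    have : εs * k ≤ εs * (log b / ε') := mul_le_mul_of_nonneg_left hk hεs
    have : εs * (log b / ε') = log b * (εs / ε') := by ring
    linarith
  calc log b ≤ b ^ (εs / ε') * exp (-εs * k) * log b :=
        le_mul_of_one_le_left (log_nonneg hb) hexp
    _ = _ := by field_simp

theorem one_sub_mul_exp_neg_pow_le_inv {ε' εs α b k : ℝ} (hεs : 0 ≤ εs) (hα : 0 < α)
    (hx : α * exp (-εs * k) ≤ 1) (hb : 1 ≤ b) (hk : k ≤ log b / ε') :
    (1 - α * exp (-εs * k)) ^ ⌈(1 / α) * b ^ (εs / ε') * log b⌉₊ ≤ b⁻¹ :=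
  one_sub_pow_le_inv_of_log_le hx (by linarith) <|
    (log_le_mul_exp_neg hεs hα hb hk).trans
      (mul_le_mul_of_nonneg_right (Nat.le_ceil _) (by positivity))

theorem exp_neg_pow_ceil_log_div_le_inv {ε' b : ℝ} (hε' : 0 < ε') (hb : 1 ≤ b) :
    exp (-ε') ^ ⌈log b / ε'⌉₊ ≤ b⁻¹ := calc
  _ = exp (-(ε' * ⌈log b / ε'⌉₊)) := by rw [← exp_nat_mul]; ring_nf
  _ ≤ exp (-log b) := exp_le_exp.2 (neg_le_neg ((div_le_iff₀' hε').1 (Nat.le_ceil _)))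
  _ = b⁻¹ := by rw [exp_neg, exp_log (by linarith)]

/-- Key estimate in the utility guarantee (Theorem `goodness-guarantee`) of the
hyperparameter tuning mechanism with random dropping: with threshold noise
`k ~ Geo(e^(-ε'))`, if a mechanism with parameter `ε*` outputs a good value with
probability at least `α` and is repeated `T = ⌈(1/α)·(2/β)^(ε*/ε')·ln(2/β)⌉` times,
then the probability that every copy is dropped or bad is at most `β`. -/
theorem goodness_guarantee_estimate
    (ε' εs α β : ℝ) (hε' : 0 < ε') (hεs : 0 < εs)
    (hα : α ∈ Set.Ioo (0:ℝ) 1) (hβ : β ∈ Set.Ioo (0:ℝ) 1) :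
    (∑' k : ℕ, (1 - Real.exp (-ε')) * Real.exp (-ε' * k) *
        (1 - α * Real.exp (-εs * k)) ^
          ⌈(1 / α) * (2 / β) ^ (εs / ε') * Real.log (2 / β)⌉₊)
      ≤ β := by
  obtain ⟨hα0, hα1⟩ := hα
  obtain ⟨hβ0, hβ1⟩ := hβ
  have hb : 1 ≤ 2 / β := by rw [le_div_iff₀ hβ0]; linarith
  have hx0 : ∀ k : ℕ, 0 ≤ α * exp (-εs * k) := fun k => by positivity
  have hx1 : ∀ k : ℕ, α * exp (-εs * k) ≤ 1 := fun k =>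
    mul_le_one₀ hα1.le (exp_nonneg _) (exp_le_one_iff.2 (by nlinarith [k.cast_nonneg (α := ℝ)]))
  simp_rw [fun k : ℕ => show exp (-ε' * k) = exp (-ε') ^ k by rw [← exp_nat_mul]; ring_nf]
  have hsum := tsum_one_sub_mul_pow_mul_le (exp_nonneg (-ε'))
    (exp_lt_one_iff.2 (neg_lt_zero.2 hε')) (fun k => pow_nonneg (by linarith [hx1 k]) _)
    (fun k => pow_le_one₀ (by linarith [hx1 k]) (by linarith [hx0 k])) ⌈log (2 / β) / ε'⌉₊
    (inv_nonneg.2 (by positivity : (0 : ℝ) ≤ 2 / β))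
    (fun k hk => one_sub_mul_exp_neg_pow_le_inv hεs.le hα0 (hx1 k) hb (Nat.lt_ceil.1 hk).le)
  have htail := exp_neg_pow_ceil_log_div_le_inv hε' hb
  rw [inv_div] at hsum htail
  linarith
end

section
/- For all reals ε > 0, α > 1, ℓ > 0, and a, b ∈ (0, 1) satisfying a^{1−α}·b^{α} ≤ e^{ε(α−1)}, it holds that (1 − a)^{α} · (1 − e^{−ε(1+ℓ)}·b)^{1−α} ≤ exp(e^{−ε(1+αℓ)}). -/
/-!
Put `v = e^{-ε(1+ℓ)} b` and `δ = e^{-ε(1+αℓ)}`; the hypothesis becomes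
`v^α a^{1-α} ≤ δ`.
Bernoulli's inequality for `(v/a)^α` turns this into the linear bound `αv - (α-1)a ≤ δ`.
Writing the logarithm of the left-hand side as `log(1-a) + (α-1) log((1-a)/(1-v))` and
using `log x ≤ x - 1` on both logarithms, the claim reduces to
`-a + (α-1)(v-a)/(1-v) ≤ δ`, which follows from the linear bound because `δ ≤ 1`.
-/

open Real

lemma mul_sub_mul_le_rpow_mul_rpow_one_sub {x y p : ℝ} (hx : 0 < x) (hy : 0 ≤ y)
    (hp : 1 ≤ p) :
    p * y - (p - 1) * x ≤ y ^ p * x ^ (1 - p) := by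
  have hbern : 1 + p * (y / x - 1) ≤ (y / x) ^ p := by
    simpa using one_add_mul_self_le_rpow_one_add (s := y / x - 1)
      (by linarith [div_nonneg hy hx.le]) hp
  have hrw : (y / x) ^ p * x = y ^ p * x ^ (1 - p) := by
    rw [div_rpow hy hx.le, rpow_sub hx, rpow_one]
    field_simp
  calc p * y - (p - 1) * x = (1 + p * (y / x - 1)) * x := by field_simp; ring
    _ ≤ (y / x) ^ p * x := mul_le_mul_of_nonneg_right hbern hx.le
    _ = y ^ p * x ^ (1 - p) := hrw

lemma one_sub_rpow_mul_one_sub_rpow_le_exp {a v α δ : ℝ} (ha₀ : 0 < a) (ha₁ : a < 1)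
    (hv₀ : 0 ≤ v) (hv₁ : v < 1) (hα : 1 ≤ α) (hδ : δ ≤ 1)
    (h : v ^ α * a ^ (1 - α) ≤ δ) :
    (1 - a) ^ α * (1 - v) ^ (1 - α) ≤ exp δ := by
  have h1a : 0 < 1 - a := by linarith
  have h1v : 0 < 1 - v := by linarith
  have hlin : α * v - (α - 1) * a ≤ δ :=
    (mul_sub_mul_le_rpow_mul_rpow_one_sub ha₀ hv₀ hα).trans h
  have hlog_a : log (1 - a) ≤ -a := by linarith [log_le_sub_one_of_pos h1a]
  have hlog_ratio : log (1 - a) - log (1 - v) ≤ (v - a) / (1 - v) := by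
    rw [← log_div h1a.ne' h1v.ne']
    calc log ((1 - a) / (1 - v)) ≤ (1 - a) / (1 - v) - 1 :=
          log_le_sub_one_of_pos (by positivity)
      _ = (v - a) / (1 - v) := by field_simp; ring
  have hratio : (α - 1) * ((v - a) / (1 - v)) ≤ δ + a := by
    rw [mul_div_assoc', div_le_iff₀ h1v]
    nlinarith [mul_nonneg ha₀.le h1v.le, mul_nonneg hv₀ (sub_nonneg.2 hδ)]
  rw [rpow_def_of_pos h1a, rpow_def_of_pos h1v, ← exp_add, exp_le_exp]
  nlinarith [mul_le_mul_of_nonneg_left hlog_ratio (sub_nonneg.2 hα)]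

/-- Lemma `rdp-to-conv-ratio`: for `ε > 0`, `α > 1`, `ℓ > 0`, and `a, b ∈ (0, 1)` with
`a^(1-α) b^α ≤ e^(ε(α-1))`, we have
`(1 - a)^α (1 - e^(-ε(1+ℓ)) b)^(1-α) ≤ exp(e^(-ε(1+αℓ)))`. -/
theorem rdp_to_conv_ratio
    (ε α ℓ a b : ℝ) (hε : 0 < ε) (hα : 1 < α) (hℓ : 0 < ℓ)
    (ha : a ∈ Set.Ioo (0:ℝ) 1) (hb : b ∈ Set.Ioo (0:ℝ) 1)
    (h : a ^ (1 - α) * b ^ α ≤ Real.exp (ε * (α - 1))) :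
    (1 - a) ^ α * (1 - Real.exp (-ε * (1 + ℓ)) * b) ^ (1 - α)
      ≤ Real.exp (Real.exp (-ε * (1 + α * ℓ))) := by
  obtain ⟨ha₀, ha₁⟩ := ha
  obtain ⟨hb₀, hb₁⟩ := hb
  set c := exp (-ε * (1 + ℓ))
  have hc₁ : c ≤ 1 := exp_le_one_iff.2 (by nlinarith)
  have hδ : exp (-ε * (1 + α * ℓ)) ≤ 1 := exp_le_one_iff.2 (by nlinarith [mul_pos hε hℓ])
  have hv₁ : c * b < 1 := by nlinarith [exp_pos (-ε * (1 + ℓ))]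
  refine one_sub_rpow_mul_one_sub_rpow_le_exp ha₀ ha₁ (by positivity) hv₁ hα.le hδ ?_
  calc (c * b) ^ α * a ^ (1 - α) = c ^ α * (a ^ (1 - α) * b ^ α) := by
        rw [mul_rpow (exp_pos _).le hb₀.le]; ring
    _ ≤ c ^ α * exp (ε * (α - 1)) := by gcongr
    _ = exp (-ε * (1 + α * ℓ)) := by rw [← exp_mul, ← exp_add]; ring_nf
end

section
/- For all reals ε > 0, α > 1, ℓ > 0, and a, b ∈ (0, 1) satisfying a ≥ e^{−ε}·b^{α/(α−1)} (equivalently a^{1−α}·b^{α} ≤ e^{ε(α−1)}), it holds that (α − 1)·e^{−ε(1+ℓ)}·b − α·a ≤ e^{−ε(1+αℓ)}. -/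
open Real

/-! Young's inequality with exponents `α` and `α / (α - 1)`, applied to `x = e^{-εℓ}` and `b` and
scaled by `e^{-ε}`, gives `α e^{-ε(1+ℓ)} b ≤ e^{-ε(1+αℓ)} + (α - 1) e^{-ε} b^{α/(α-1)}`, and the
hypothesis bounds the last term by `(α - 1) a`. -/

lemma mul_mul_le_rpow_add_mul_rpow_conjExponent {p x y : ℝ} (hp : 1 < p) (hx : 0 ≤ x)
    (hy : 0 ≤ y) : p * (x * y) ≤ x ^ p + (p - 1) * y ^ (p / (p - 1)) := by
  have hp0 : 0 < p := by linarith
  have hp1 : p - 1 ≠ 0 := by linarith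
  have young := young_inequality_of_nonneg hx hy (HolderConjugate.conjExponent hp)
  calc p * (x * y) ≤ p * (x ^ p / p + y ^ (p / (p - 1)) / (p / (p - 1))) :=
        mul_le_mul_of_nonneg_left young hp0.le
    _ = x ^ p + (p - 1) * y ^ (p / (p - 1)) := by field_simp

theorem rdp_to_conv_ratio_linear_general
    (ε α ℓ a b : ℝ) (hα : 1 < α)
    (hb : b ∈ Set.Ioo (0:ℝ) 1)
    (h : Real.exp (-ε) * b ^ (α / (α - 1)) ≤ a) :
    (α - 1) * Real.exp (-ε * (1 + ℓ)) * b - α * a ≤ Real.exp (-ε * (1 + α * ℓ)) := by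
  set x := exp (-(ε * ℓ))
  have hx : 0 ≤ x := (exp_pos _).le
  have hE : 0 ≤ exp (-ε) := (exp_pos _).le
  have hb0 : 0 ≤ b := hb.1.le
  have hB : 0 ≤ b ^ (α / (α - 1)) := rpow_nonneg hb0 _
  have young := mul_le_mul_of_nonneg_left
    (mul_mul_le_rpow_add_mul_rpow_conjExponent hα hx hb0) hE
  have exp_split : exp (-ε * (1 + ℓ)) = exp (-ε) * x := by rw [← exp_add]; ring_nf
  have exp_split_α : exp (-ε * (1 + α * ℓ)) = exp (-ε) * x ^ α := by
    rw [← exp_mul, ← exp_add]; ring_nf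
  rw [exp_split, exp_split_α]
  nlinarith [mul_nonneg hE (mul_nonneg hx hb0), mul_nonneg hE hB]

/-- Key estimate inside the proof of Lemma `rdp-to-conv-ratio` (via weighted AM–GM):
for `ε > 0`, `α > 1`, `ℓ > 0`, and `a, b ∈ (0, 1)` with `a ≥ e^(-ε) b^(α/(α-1))`,
we have `(α - 1) e^(-ε(1+ℓ)) b - α a ≤ e^(-ε(1+αℓ))`. -/
theorem rdp_to_conv_ratio_linear
    (ε α ℓ a b : ℝ) (hε : 0 < ε) (hα : 1 < α) (hℓ : 0 < ℓ)
    (ha : a ∈ Set.Ioo (0:ℝ) 1) (hb : b ∈ Set.Ioo (0:ℝ) 1)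
    (h : Real.exp (-ε) * b ^ (α / (α - 1)) ≤ a) :
    (α - 1) * Real.exp (-ε * (1 + ℓ)) * b - α * a ≤ Real.exp (-ε * (1 + α * ℓ)) :=
  rdp_to_conv_ratio_linear_general ε α ℓ a b hα hb h
end

section
/- Fix d ∈ ℕ, an index i ∈ {1, …, d}, reals ε' > 0, ε_1, …, ε_d > 0, ℓ ≥ 0, a real q' ≥ 0, and reals u'_j ∈ [0, 1] for j ≠ i. Then ∫_0^∞ ε' e^{−ε' x} · e^{−ε_i x}·q' · ∏_{j ≠ i} (1 − e^{−ε_j x}·u'_j) dx ≥ e^{−(1+ℓ)(ε' + ε_i)}·q' · ∫_0^∞ ε' e^{−ε' x} · e^{−ε_i x} · ∏_{j ≠ i} (1 − e^{−ε_j (1+ℓ)}·e^{−ε_j x}·u'_j) dx. (This shift bound, obtained by restricting the integral to x ≥ 1 + ℓ and substituting, is the key lower bound on the output probability A'(o, i) of the hyperparameter tuning mechanism with exponential threshold noise.) -/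
open Real Finset MeasureTheory

/-- Shift lower bound on the output probability `A'(o, i)` of the hyperparameter tuning
mechanism with exponential threshold noise `Exp(ε')`: restricting the integral to
`x ≥ 1 + ℓ` and substituting gives
`∫ ε' e^(-ε'x) e^(-ε_i x) q' ∏_{j≠i} (1 - e^(-ε_j x) u'_j) dx ≥
 e^(-(1+ℓ)(ε'+ε_i)) q' ∫ ε' e^(-ε'x) e^(-ε_i x) ∏_{j≠i} (1 - e^(-ε_j(1+ℓ)) e^(-ε_j x) u'_j) dx`. -/
theorem exponential_noise_shift_bound
    (d : ℕ) (i : Fin d) (ε' : ℝ) (hε' : 0 < ε')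
    (ε : Fin d → ℝ) (hε : ∀ j, 0 < ε j)
    (ℓ : ℝ) (hℓ : 0 ≤ ℓ)
    (q' : ℝ) (hq' : 0 ≤ q')
    (u' : Fin d → ℝ) (hu' : ∀ j, u' j ∈ Set.Icc (0:ℝ) 1) :
    Real.exp (-(1 + ℓ) * (ε' + ε i)) * q' *
      ∫ x in Set.Ioi (0:ℝ), ε' * Real.exp (-ε' * x) * Real.exp (-(ε i) * x) *
        ∏ j ∈ Finset.univ.filter (fun j => j ≠ i),
          (1 - Real.exp (-(ε j) * (1 + ℓ)) * Real.exp (-(ε j) * x) * u' j)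
    ≤ ∫ x in Set.Ioi (0:ℝ), ε' * Real.exp (-ε' * x) * (Real.exp (-(ε i) * x) * q') *
        ∏ j ∈ Finset.univ.filter (fun j => j ≠ i),
          (1 - Real.exp (-(ε j) * x) * u' j) := by
  set c : ℝ := 1 + ℓ with hc
  have hc0 : 0 < c := by positivity
  set f : ℝ → ℝ := fun x => ε' * Real.exp (-ε' * x) * (Real.exp (-(ε i) * x) * q') *
        ∏ j ∈ Finset.univ.filter (fun j => j ≠ i),
          (1 - Real.exp (-(ε j) * x) * u' j) with hf
  -- f is continuous
  have hcont : Continuous f := by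
    apply Continuous.mul
    · fun_prop
    · exact continuous_finset_prod _ (fun j _ => by fun_prop)
  -- f is nonnegative on [0, ∞)
  have hfnn : ∀ x : ℝ, 0 ≤ x → 0 ≤ f x := by
    intro x hx
    apply mul_nonneg
    · positivity
    · apply Finset.prod_nonneg
      intro j _
      have h1 : Real.exp (-(ε j) * x) ≤ 1 := by
        apply Real.exp_le_one_iff.mpr
        nlinarith [(hε j).le]
      have h2 := (hu' j).1
      have h3 := (hu' j).2
      nlinarith [Real.exp_pos (-(ε j) * x)]
  -- product bounded by 1 on [0,∞)
  have hprod_le : ∀ x : ℝ, 0 ≤ x →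
      (∏ j ∈ Finset.univ.filter (fun j => j ≠ i), (1 - Real.exp (-(ε j) * x) * u' j)) ≤ 1 := by
    intro x hx
    apply Finset.prod_le_one
    · intro j _
      have h1 : Real.exp (-(ε j) * x) ≤ 1 := by
        apply Real.exp_le_one_iff.mpr
        nlinarith [(hε j).le]
      have h2 := (hu' j).1
      have h3 := (hu' j).2
      nlinarith [Real.exp_pos (-(ε j) * x)]
    · intro j _
      have h2 := (hu' j).1
      nlinarith [(Real.exp_pos (-(ε j) * x)).le]
  -- integrability of f on Ioi 0
  have hint : IntegrableOn f (Set.Ioi 0) volume := by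
    apply Integrable.mono' ((exp_neg_integrableOn_Ioi 0 hε').const_mul (ε' * q'))
    · exact hcont.aestronglyMeasurable.restrict
    · filter_upwards [ae_restrict_mem measurableSet_Ioi] with x hx
      have hx0 : (0:ℝ) ≤ x := (le_of_lt hx)
      rw [Real.norm_eq_abs, abs_of_nonneg (hfnn x hx0)]
      simp only [hf]
      have h1 : Real.exp (-(ε i) * x) ≤ 1 := by
        apply Real.exp_le_one_iff.mpr
        nlinarith [(hε i).le]
      have hp := hprod_le x hx0
      have hpn : 0 ≤ ∏ j ∈ Finset.univ.filter (fun j => j ≠ i),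
          (1 - Real.exp (-(ε j) * x) * u' j) := by
        apply Finset.prod_nonneg
        intro j _
        have : Real.exp (-(ε j) * x) ≤ 1 := by
          apply Real.exp_le_one_iff.mpr
          nlinarith [(hε j).le]
        nlinarith [(hu' j).1, (hu' j).2, Real.exp_pos (-(ε j) * x)]
      have hE : ε' * Real.exp (-ε' * x) * (Real.exp (-(ε i) * x) * q') ≤
          ε' * q' * Real.exp (-ε' * x) := by
        calc ε' * Real.exp (-ε' * x) * (Real.exp (-(ε i) * x) * q')
            = ε' * Real.exp (-ε' * x) * q' * Real.exp (-(ε i) * x) := by ring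
          _ ≤ ε' * Real.exp (-ε' * x) * q' * 1 :=
              mul_le_mul_of_nonneg_left h1 (by positivity)
          _ = ε' * q' * Real.exp (-ε' * x) := by ring
      calc ε' * Real.exp (-ε' * x) * (Real.exp (-(ε i) * x) * q') *
            ∏ j ∈ Finset.univ.filter (fun j => j ≠ i), (1 - Real.exp (-(ε j) * x) * u' j)
          ≤ ε' * Real.exp (-ε' * x) * (Real.exp (-(ε i) * x) * q') * 1 := by
            apply mul_le_mul_of_nonneg_left hp
            positivity
        _ ≤ ε' * q' * Real.exp (-ε' * x) := by rw [mul_one]; exact hE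
  -- LHS equals ∫ x in Ioi 0, f (x + c)
  have hshift : (Real.exp (-(1 + ℓ) * (ε' + ε i)) * q' *
      ∫ x in Set.Ioi (0:ℝ), ε' * Real.exp (-ε' * x) * Real.exp (-(ε i) * x) *
        ∏ j ∈ Finset.univ.filter (fun j => j ≠ i),
          (1 - Real.exp (-(ε j) * (1 + ℓ)) * Real.exp (-(ε j) * x) * u' j))
      = ∫ x in Set.Ioi (0:ℝ), f (x + c) := by
    rw [← MeasureTheory.integral_const_mul]
    apply setIntegral_congr_fun measurableSet_Ioi
    intro x _
    simp only [hf]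
    have hprodeq : ∏ j ∈ Finset.univ.filter (fun j => j ≠ i),
          (1 - Real.exp (-(ε j) * (x + c)) * u' j)
        = ∏ j ∈ Finset.univ.filter (fun j => j ≠ i),
          (1 - Real.exp (-(ε j) * c) * Real.exp (-(ε j) * x) * u' j) := by
      apply Finset.prod_congr rfl
      intro j _
      rw [← Real.exp_add]
      ring_nf
    rw [hprodeq, ← hc]
    rw [show -ε' * (x + c) = -ε' * c + -ε' * x by ring, Real.exp_add]
    rw [show -(ε i) * (x + c) = -(ε i) * c + -(ε i) * x by ring, Real.exp_add]
    rw [show -c * (ε' + ε i) = -ε' * c + -(ε i) * c by ring, Real.exp_add]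
    ring
  rw [hshift]
  -- change of variables: ∫ x in Ioi 0, f (x + c) = ∫ x in Ioi c, f x
  have hcov : (∫ x in Set.Ioi (0:ℝ), f (x + c)) = ∫ x in Set.Ioi c, f x := by
    have hmp : MeasurePreserving (fun x : ℝ => x + c) volume volume :=
      measurePreserving_add_right volume c
    have hemb : MeasurableEmbedding (fun x : ℝ => x + c) :=
      (MeasurableEquiv.addRight c).measurableEmbedding
    have := hmp.setIntegral_preimage_emb hemb f (Set.Ioi c)
    rw [← this]
    congr 1
    ext x
    simp [Set.mem_preimage, Set.mem_Ioi]
  rw [hcov]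
  exact setIntegral_mono_set hint
    (by filter_upwards [ae_restrict_mem measurableSet_Ioi] with x hx using hfnn x hx.le)
    (HasSubset.Subset.eventuallyLE (Set.Ioi_subset_Ioi hc0.le))
end
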